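/- For n ≥ k > 0, one has T(n,k,s) = (1/n) · ∑_{d | gcd(n,k)} (−1)^{k−k/d} c_d(s) · C(n/d, k/d), where c_d(s) = ∑_{j ∈ (Z/dZ)^*} e^{2πijs/d} is the Ramanujan sum. -/

import Mathlib

/-!
Detect the condition `∑ Q = s` with roots of unity: `n · [x = s] = ∑_{η ^ n = 1} η ^ (s - x)`.
For `η` of exact order `d ∣ n`, the sum over `k`-subsets `Q` of `∏_{a ∈ Q} η⁻¹ ^ a` is the
coefficient of `X ^ k` in `∏_{a ∈ ℤ/nℤ} (1 + η⁻¹ ^ a X) = (1 - (-X) ^ d) ^ (n / d)`, namely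
`(-1) ^ (k - k / d) * C(n / d, k / d)` if `d ∣ k` and `0` otherwise. Grouping the roots `η` by
their order `d` turns the remaining `∑ η ^ s` into the Ramanujan sum `c_d(s)`.
-/

open Complex in
/-- The Ramanujan sum `c_d(s) = ∑_{j ∈ (ℤ/dℤ)^*} e^{2πijs/d}`. -/
noncomputable def ramanujanSum (d : ℕ) (s : ℤ) : ℂ :=
  ∑ j ∈ (Finset.range d).filter (fun j => Nat.Coprime j d),
    Complex.exp (2 * Real.pi * Complex.I * j * s / d)

/-- `T n k s` is the number of `k`-element subsets of `ℤ/nℤ` whose sum of elements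
is `s` modulo `n`. -/
noncomputable def T (n k : ℕ) (s : ℤ) : ℕ :=
  Nat.card {Q : Finset (ZMod n) // Q.card = k ∧ (∑ a ∈ Q, a) = (s : ZMod n)}

open Finset Polynomial

theorem Function.Periodic.prod_range_mul {M : Type*} [CommMonoid M] {f : ℕ → M} {m : ℕ}
    (hf : Function.Periodic f m) (g : ℕ) :
    ∏ i ∈ range (m * g), f i = (∏ i ∈ range m, f i) ^ g := by
  induction g with
  | zero => simp
  | succ g ih =>
    rw [mul_add_one, prod_range_add, ih, pow_succ]
    congr 1
    exact prod_congr rfl fun i _ => by rw [add_comm, mul_comm]; exact hf.nat_mul g i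

theorem ZMod.prod_univ_val {M : Type*} [CommMonoid M] (n : ℕ) [NeZero n] (f : ℕ → M) :
    ∏ a : ZMod n, f a.val = ∏ i ∈ range n, f i := by
  obtain ⟨m, rfl⟩ := Nat.exists_eq_succ_of_ne_zero (NeZero.ne n)
  -- `ZMod (m + 1)` is `Fin (m + 1)` by definition, and `ZMod.val` is the coercion to `ℕ`.
  exact Fin.prod_univ_eq_prod_range f _

theorem ZMod.pow_val_sum_eq_prod {M : Type*} [CommMonoid M] {n : ℕ} [NeZero n] {η : M}
    (hη : η ^ n = 1) (Q : Finset (ZMod n)) : η ^ (∑ a ∈ Q, a).val = ∏ a ∈ Q, η ^ a.val := by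
  induction Q using Finset.cons_induction with
  | empty => simp
  | cons a Q ha ih =>
    rw [sum_cons, prod_cons, ← ih]
    exact (AddChar.zmodChar n hη).map_add_eq_mul a _

theorem Polynomial.coeff_prod_one_add_C_mul_X {R ι : Type*} [CommRing R] (s : Finset ι)
    (w : ι → R) (k : ℕ) :
    (∏ i ∈ s, (1 + C (w i) * X)).coeff k = ∑ t ∈ s.powersetCard k, ∏ i ∈ t, w i := by
  classical
  simp_rw [prod_one_add, prod_mul_distrib, prod_const, ← map_prod, finsetSum_coeff,
    coeff_C_mul_X_pow, powersetCard_eq_filter, sum_filter, eq_comm]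

theorem Polynomial.coeff_one_sub_neg_X_pow_pow {R : Type*} [CommRing R] {d : ℕ} (hd : 0 < d)
    (g k : ℕ) :
    ((1 - (-X) ^ d) ^ g : R[X]).coeff k =
      if d ∣ k then (-1) ^ (k - k / d) * (g.choose (k / d) : R) else 0 := by
  have hneg : (-X : R[X]) = C (-1) * X := by simp
  have hexpand : (1 - (-X) ^ d) ^ g = (expand R d (((1 + X) ^ g).comp (-X))).comp (-X) := by
    simp [sub_eq_add_neg]
  rw [hexpand, hneg, comp_C_mul_X_coeff, coeff_expand hd]
  split_ifs
  · set j := k / d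
    obtain ⟨a, ha⟩ : ∃ a, k = j + a := Nat.exists_eq_add_of_le (Nat.div_le_self k d)
    rw [comp_C_mul_X_coeff, coeff_one_add_X_pow, ha, Nat.add_sub_cancel_left, pow_add]
    ring_nf
    simp
  · simp

section RootsOfUnity

variable {R : Type*} [CommRing R] [IsDomain R]

theorem IsPrimitiveRoot.nthRootsFinset_eq_image_range [DecidableEq R] {ζ : R} {n : ℕ}
    (h : IsPrimitiveRoot ζ n) : nthRootsFinset n (1 : R) = (range n).image (ζ ^ ·) := by
  rw [nthRootsFinset_def, h.nthRoots_eq (one_pow n)]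
  simp [Multiset.toFinset_map]

theorem IsPrimitiveRoot.prod_one_add_C_pow_mul_X {ζ : R} {d : ℕ} (h : IsPrimitiveRoot ζ d)
    (hd : 0 < d) : ∏ i ∈ range d, (1 + C (ζ ^ i) * X) = 1 - (-X) ^ d := by
  classical
  have hC : IsPrimitiveRoot (C ζ) d := h.map_of_injective C_injective
  have hprod := hC.pow_sub_pow_eq_prod_sub_mul 1 (-X) hd
  rw [one_pow] at hprod
  rw [hprod, hC.nthRootsFinset_eq_image_range, prod_image hC.injOn_pow]
  simp [map_pow]

theorem IsPrimitiveRoot.sum_powersetCard_prod_pow_val {ω : R} {n d : ℕ} [NeZero n]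
    (hω : IsPrimitiveRoot ω d) (hdn : d ∣ n) (k : ℕ) :
    ∑ Q ∈ powersetCard k (univ : Finset (ZMod n)), ∏ a ∈ Q, ω ^ a.val =
      if d ∣ k then (-1) ^ (k - k / d) * ((n / d).choose (k / d) : R) else 0 := by
  have hd : 0 < d := Nat.pos_of_dvd_of_pos hdn (NeZero.pos n)
  have hper : Function.Periodic (fun i => 1 + C (ω ^ i) * X) d := fun i => by
    simp only [pow_add, hω.pow_eq_one, mul_one]
  obtain ⟨g, rfl⟩ := hdn
  rw [← coeff_prod_one_add_C_mul_X, ZMod.prod_univ_val _ (fun i => 1 + C (ω ^ i) * X),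
    hper.prod_range_mul, hω.prod_one_add_C_pow_mul_X hd, coeff_one_sub_neg_X_pow_pow hd,
    Nat.mul_div_cancel_left _ hd]

end RootsOfUnity

section Field

variable {K : Type*} [Field K]

theorem IsPrimitiveRoot.sum_nthRootsFinset_zpow {ζ : K} {n : ℕ}
    (h : IsPrimitiveRoot ζ n) (m : ℤ) :
    ∑ η ∈ nthRootsFinset n (1 : K), η ^ m = if (n : ℤ) ∣ m then (n : K) else 0 := by
  have hpow : ∀ i : ℕ, (ζ ^ i) ^ m = (ζ ^ m) ^ i := fun i => by
    rw [← zpow_natCast, ← zpow_natCast, ← zpow_mul, ← zpow_mul, mul_comm]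
  classical
  rw [h.nthRootsFinset_eq_image_range, sum_image h.injOn_pow]
  simp_rw [hpow]
  split_ifs with hdvd
  · simp [(h.zpow_eq_one_iff_dvd m).2 hdvd]
  · rw [geom_sum_eq ((h.zpow_eq_one_iff_dvd m).not.2 hdvd), ← hpow, h.pow_eq_one]
    simp

theorem IsPrimitiveRoot.sum_powersetCard_zpow_sub_val {η : K} {n d : ℕ} [NeZero n]
    (hη : IsPrimitiveRoot η d) (hdn : d ∣ n) (k : ℕ) (s : ℤ) :
    ∑ Q ∈ powersetCard k (univ : Finset (ZMod n)), η ^ (s - (∑ a ∈ Q, a).val) =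
      η ^ s * if d ∣ k then (-1) ^ (k - k / d) * ((n / d).choose (k / d) : K) else 0 := by
  have hη0 : η ≠ 0 := hη.ne_zero (Nat.pos_of_dvd_of_pos hdn (NeZero.pos n)).ne'
  have hinv : (η⁻¹) ^ n = 1 := by rw [inv_pow, (hη.pow_eq_one_iff_dvd n).2 hdn, inv_one]
  rw [← hη.inv.sum_powersetCard_prod_pow_val hdn, mul_sum]
  refine sum_congr rfl fun Q _ => ?_
  rw [← ZMod.pow_val_sum_eq_prod hinv, zpow_sub₀ hη0, inv_pow, zpow_natCast, div_eq_mul_inv]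

end Field

theorem ramanujanSum_eq_sum_primitiveRoots (d : ℕ) (s : ℤ) :
    ramanujanSum d s = ∑ η ∈ primitiveRoots d ℂ, η ^ s := by
  rcases eq_or_ne d 0 with rfl | hd
  · simp [ramanujanSum]
  have : NeZero d := ⟨hd⟩
  have h := Complex.isPrimitiveRoot_exp d hd
  refine sum_nbij (fun j => Complex.exp (2 * Real.pi * Complex.I / d) ^ j) (fun j hj => ?_)
    (h.injOn_pow.mono (filter_subset _ _)) (fun η hη => ?_) (fun j _ => ?_)
  · rw [mem_filter, mem_range] at hj
    exact (mem_primitiveRoots (NeZero.pos d)).2 (h.pow_of_coprime j hj.2)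
  · rw [mem_coe, mem_primitiveRoots (NeZero.pos d), h.isPrimitiveRoot_iff] at hη
    obtain ⟨j, hjd, hj, rfl⟩ := hη
    exact ⟨j, mem_filter.2 ⟨mem_range.2 hjd, hj⟩, rfl⟩
  · rw [← Complex.exp_nat_mul, ← Complex.exp_int_mul]
    congr 1
    field_simp

theorem T_eq_card_filter (n k : ℕ) [NeZero n] (s : ℤ) :
    T n k s = #{Q ∈ powersetCard k (univ : Finset (ZMod n)) | ∑ a ∈ Q, a = (s : ZMod n)} := by
  rw [T, Nat.card_eq_fintype_card, Fintype.card_subtype, powersetCard_eq_filter, powerset_univ,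
    filter_filter]

theorem T_mul_eq_sum_nthRootsFinset (n k : ℕ) [NeZero n] (s : ℤ) :
    (T n k s : ℂ) * n = ∑ Q ∈ powersetCard k (univ : Finset (ZMod n)),
      ∑ η ∈ nthRootsFinset n (1 : ℂ), η ^ (s - (∑ a ∈ Q, a).val) := by
  rw [T_eq_card_filter, card_filter, Nat.cast_sum, sum_mul]
  refine sum_congr rfl fun Q _ => ?_
  rw [(Complex.isPrimitiveRoot_exp n (NeZero.ne n)).sum_nthRootsFinset_zpow]
  simp [← ZMod.intCast_eq_intCast_iff_dvd_sub, eq_comm]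

theorem T_mul_eq_sum_divisors (n k : ℕ) [NeZero n] (s : ℤ) :
    (T n k s : ℂ) * n = ∑ d ∈ n.divisors, ramanujanSum d s *
      if d ∣ k then (-1) ^ (k - k / d) * ((n / d).choose (k / d) : ℂ) else 0 := by
  rw [T_mul_eq_sum_nthRootsFinset, sum_comm,
    IsPrimitiveRoot.nthRoots_one_eq_biUnion_primitiveRoots,
    sum_biUnion fun _ _ _ _ hde => IsPrimitiveRoot.disjoint hde]
  refine sum_congr rfl fun d hd => ?_
  rw [ramanujanSum_eq_sum_primitiveRoots, sum_mul]
  refine sum_congr rfl fun η hη => ?_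
  exact ((mem_primitiveRoots (Nat.pos_of_mem_divisors hd)).1 hη).sum_powersetCard_zpow_sub_val
    (Nat.dvd_of_mem_divisors hd) k s

theorem stmt_6_general (n k : ℕ) (s : ℤ) :
    (T n k s : ℂ) * n =
      ∑ d ∈ (Nat.gcd n k).divisors,
        (-1) ^ (k - k / d) * ramanujanSum d s * (Nat.choose (n / d) (k / d) : ℂ) := by
  rcases Nat.eq_zero_or_pos n with rfl | hn
  · simp only [Nat.cast_zero, mul_zero, Nat.gcd_zero_left, Nat.zero_div]
    refine (sum_eq_zero fun d hd => ?_).symm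
    rw [Nat.choose_eq_zero_of_lt (Nat.div_pos (Nat.divisor_le hd) (Nat.pos_of_mem_divisors hd)),
      Nat.cast_zero, mul_zero]
  have : NeZero n := ⟨hn.ne'⟩
  have hdiv : {d ∈ n.divisors | d ∣ k} = (n.gcd k).divisors := by
    ext d
    simp [Nat.dvd_gcd_iff, hn.ne']
  rw [T_mul_eq_sum_divisors]
  simp_rw [mul_ite, mul_zero, ← sum_filter, hdiv]
  exact sum_congr rfl fun d _ => by ring

/-- `T(n,k,s) = (1/n) ∑_{d ∣ gcd(n,k)} (−1)^{k−k/d} c_d(s) C(n/d, k/d)`. -/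
theorem stmt_6 (n k : ℕ) (hk : 0 < k) (hkn : k ≤ n) (s : ℤ) :
    (T n k s : ℂ) * n =
      ∑ d ∈ (Nat.gcd n k).divisors,
        (-1) ^ (k - k / d) * ramanujanSum d s * (Nat.choose (n / d) (k / d) : ℂ) :=
  stmt_6_general n k s
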